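/- arXiv:1410.7822 — 6 statements merged into one kernel-verified Lean document; each statement's English description precedes it below -/
import Mathlib

section
/- At an efficient market equilibrium satisfying the KKT conditions, the transmission congestion surplus satisfies TCS = ∑_{k=0}^{N−1} μ(k)ᵀ c, and consequently TCS ≥ 0. -/
/-- At an efficient market equilibrium satisfying the KKT conditions, the
transmission congestion surplus `TCS = -∑ₖ λ(k)ᵀ(v(k)+u(k))` equals `∑ₖ μ(k)ᵀ c`,
hence is nonnegative. -/
theorem tcs_eq_and_nonneg
    (n m N : ℕ) (H : Matrix (Fin (2 * m)) (Fin n) ℝ) (c : Fin (2 * m) → ℝ)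
    (hc : ∀ ℓ, 0 ≤ c ℓ)
    (v u : Fin N → Fin n → ℝ) (γ : Fin N → ℝ) (μ : Fin N → Fin (2 * m) → ℝ)
    (lam : Fin N → Fin n → ℝ)
    (hμ : ∀ k ℓ, 0 ≤ μ k ℓ)
    (hlam : ∀ k i, lam k i = γ k - H.transpose.mulVec (μ k) i)
    (hflow : ∀ k, H.mulVec (fun i => v k i + u k i) ≤ c)
    (hbal : ∀ k, ∑ i, (v k i + u k i) = 0)
    (hcs : ∀ k ℓ, μ k ℓ * (H.mulVec (fun i => v k i + u k i) ℓ - c ℓ) = 0) :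
    (-(∑ k, ∑ i, lam k i * (v k i + u k i)) = ∑ k, ∑ ℓ, μ k ℓ * c ℓ) ∧
      0 ≤ -(∑ k, ∑ i, lam k i * (v k i + u k i)) := by
  have key : ∀ k : Fin N, ∑ i, lam k i * (v k i + u k i) = -(∑ ℓ, μ k ℓ * c ℓ) := by
    intro k
    have h1 : ∑ i, lam k i * (v k i + u k i)
        = γ k * (∑ i, (v k i + u k i))
          - ∑ i, H.transpose.mulVec (μ k) i * (v k i + u k i) := by
      simp only [hlam, sub_mul, Finset.sum_sub_distrib, Finset.mul_sum]
    rw [h1, hbal k, mul_zero, zero_sub, neg_inj]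
    have h2 : ∑ i, H.transpose.mulVec (μ k) i * (v k i + u k i)
        = ∑ ℓ, μ k ℓ * H.mulVec (fun i => v k i + u k i) ℓ := by
      simp only [Matrix.mulVec, Matrix.transpose_apply, dotProduct,
        Finset.sum_mul, Finset.mul_sum]
      rw [Finset.sum_comm]
      congr 1; ext i; congr 1; ext ℓ; ring
    rw [h2]
    refine Finset.sum_congr rfl fun ℓ _ => ?_
    have := hcs k ℓ
    nlinarith [this]
  have heq : -(∑ k, ∑ i, lam k i * (v k i + u k i)) = ∑ k, ∑ ℓ, μ k ℓ * c ℓ := by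
    rw [← Finset.sum_neg_distrib]
    exact Finset.sum_congr rfl fun k _ => by rw [key k, neg_neg]
  refine ⟨heq, heq ▸ Finset.sum_nonneg fun k _ =>
    Finset.sum_nonneg fun ℓ _ => mul_nonneg (hμ k ℓ) (hc ℓ)⟩
end

section
/- At an efficient market equilibrium satisfying the KKT conditions, the storage congestion surplus satisfies SCS = ∑_{i=1}^n ν̄_iᵀ b_i, and consequently SCS ≥ 0. -/
/-- `L` is the lower-triangular matrix with entries `-1` on and below the diagonal. -/
def storageMatrix (N : ℕ) : Matrix (Fin N) (Fin N) ℝ :=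
  Matrix.of fun k ℓ => if ℓ ≤ k then -1 else 0

/-- At an efficient market equilibrium satisfying the KKT conditions, the
storage congestion surplus `SCS = ∑ᵢ λᵢᵀ uᵢ` equals `∑ᵢ ν̄ᵢᵀ bᵢ`, hence is
nonnegative. -/
theorem scs_eq_and_nonneg
    (n N : ℕ) (b : Fin n → ℝ) (hb : ∀ i, 0 ≤ b i)
    (lam u νbar νlow : Fin n → Fin N → ℝ)
    (hνbar : ∀ i k, 0 ≤ νbar i k) (hνlow : ∀ i k, 0 ≤ νlow i k)
    (hstat : ∀ i, (storageMatrix N).transpose.mulVec (fun k => νbar i k - νlow i k)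
        = lam i)
    (hcs_low : ∀ i k, νlow i k * (storageMatrix N).mulVec (u i) k = 0)
    (hcs_up : ∀ i k, νbar i k * (b i - (storageMatrix N).mulVec (u i) k) = 0) :
    (∑ i, ∑ k, lam i k * u i k = ∑ i, ∑ k, νbar i k * b i) ∧
      0 ≤ ∑ i, ∑ k, lam i k * u i k := by
  have key : ∀ i, ∑ k, lam i k * u i k = ∑ k, νbar i k * b i := by
    intro i
    have h1 : ∑ k, lam i k * u i k
        = ∑ k, (νbar i k - νlow i k) * (storageMatrix N).mulVec (u i) k := by
      rw [← hstat i]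
      have : dotProduct ((storageMatrix N).transpose.mulVec
            (fun k => νbar i k - νlow i k)) (u i)
          = dotProduct (fun k => νbar i k - νlow i k)
            ((storageMatrix N).mulVec (u i)) := by
        rw [Matrix.mulVec_transpose, ← Matrix.dotProduct_mulVec]
      simpa [dotProduct] using this
    rw [h1]
    congr 1
    ext k
    have h2 := hcs_low i k
    have h3 := hcs_up i k
    ring_nf
    ring_nf at h2 h3
    linarith
  constructor
  · exact Finset.sum_congr rfl fun i _ => key i
  · rw [Finset.sum_congr rfl fun i _ => key i]
    exact Finset.sum_nonneg fun i _ => Finset.sum_nonneg fun k _ =>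
      mul_nonneg (hνbar i k) (hb i)
end

section
/- At an efficient market equilibrium satisfying the KKT conditions, the merchandising surplus MS = −∑_k λ(k)ᵀ v(k) is nonnegative; in fact MS = ∑_k μ(k)ᵀ c + ∑_i ν̄_iᵀ b_i. -/
/-- At an efficient market equilibrium satisfying the KKT conditions, the
merchandising surplus `MS = -∑ₖ λ(k)ᵀ v(k)` equals `∑ₖ μ(k)ᵀ c + ∑ᵢ ν̄ᵢᵀ bᵢ`,
hence is nonnegative. -/
theorem ms_eq_and_nonneg
    (n m N : ℕ) (H : Matrix (Fin (2 * m)) (Fin n) ℝ) (c : Fin (2 * m) → ℝ)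
    (hc : ∀ ℓ, 0 ≤ c ℓ) (b : Fin n → ℝ) (hb : ∀ i, 0 ≤ b i)
    (v u : Fin N → Fin n → ℝ) (γ : Fin N → ℝ) (μ : Fin N → Fin (2 * m) → ℝ)
    (lam : Fin N → Fin n → ℝ) (νbar νlow : Fin n → Fin N → ℝ)
    (hμ : ∀ k ℓ, 0 ≤ μ k ℓ)
    (hνbar : ∀ i k, 0 ≤ νbar i k) (hνlow : ∀ i k, 0 ≤ νlow i k)
    (hlam : ∀ k i, lam k i = γ k - H.transpose.mulVec (μ k) i)
    (hflow : ∀ k, H.mulVec (fun i => v k i + u k i) ≤ c)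
    (hbal : ∀ k, ∑ i, (v k i + u k i) = 0)
    (hcs_line : ∀ k ℓ, μ k ℓ * (H.mulVec (fun i => v k i + u k i) ℓ - c ℓ) = 0)
    (hstat : ∀ i, (storageMatrix N).transpose.mulVec (fun k => νbar i k - νlow i k)
        = fun k => lam k i)
    (hstg : ∀ i k, 0 ≤ (storageMatrix N).mulVec (fun k => u k i) k ∧
        (storageMatrix N).mulVec (fun k => u k i) k ≤ b i)
    (hcs_low : ∀ i k, νlow i k * (storageMatrix N).mulVec (fun k => u k i) k = 0)
    (hcs_up : ∀ i k, νbar i k * (b i - (storageMatrix N).mulVec (fun k => u k i) k) = 0) :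
    (-(∑ k, ∑ i, lam k i * v k i) =
        (∑ k, ∑ ℓ, μ k ℓ * c ℓ) + ∑ i, ∑ k, νbar i k * b i) ∧
      0 ≤ -(∑ k, ∑ i, lam k i * v k i) := by
  have key : (-(∑ k, ∑ i, lam k i * v k i) =
      (∑ k, ∑ ℓ, μ k ℓ * c ℓ) + ∑ i, ∑ k, νbar i k * b i) := by
    have hA : ∀ k, (∑ i, lam k i * (v k i + u k i)) = -(∑ ℓ, μ k ℓ * c ℓ) := by
      intro k
      have hμc : ∀ ℓ, μ k ℓ * (H.mulVec (fun i => v k i + u k i) ℓ) = μ k ℓ * c ℓ := by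
        intro ℓ
        have := hcs_line k ℓ
        nlinarith [this]
      calc (∑ i, lam k i * (v k i + u k i))
          = ∑ i, (γ k * (v k i + u k i)
              - ∑ ℓ, μ k ℓ * (H ℓ i * (v k i + u k i))) := by
            refine Finset.sum_congr rfl fun i _ => ?_
            rw [hlam k i]
            simp only [Matrix.mulVec, dotProduct, Matrix.transpose_apply]
            rw [sub_mul, Finset.sum_mul]
            congr 1
            exact Finset.sum_congr rfl fun ℓ _ => by ring
        _ = γ k * (∑ i, (v k i + u k i))
              - ∑ ℓ, μ k ℓ * (H.mulVec (fun i => v k i + u k i) ℓ) := by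
            rw [Finset.sum_sub_distrib, ← Finset.mul_sum, Finset.sum_comm]
            congr 1
            refine Finset.sum_congr rfl fun ℓ _ => ?_
            simp only [Matrix.mulVec, dotProduct]
            rw [Finset.mul_sum]
        _ = -(∑ ℓ, μ k ℓ * c ℓ) := by
            rw [hbal k, mul_zero, zero_sub]
            congr 1
            exact Finset.sum_congr rfl fun ℓ _ => hμc ℓ
    have hB : ∀ i, (∑ k, lam k i * u k i) = ∑ k, νbar i k * b i := by
      intro i
      have hL : ∀ j, (νbar i j - νlow i j) *
          (storageMatrix N).mulVec (fun k => u k i) j = νbar i j * b i := by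
        intro j
        have h1 := hcs_low i j
        have h2 := hcs_up i j
        nlinarith [h1, h2]
      calc (∑ k, lam k i * u k i)
          = ∑ k, ∑ j, (νbar i j - νlow i j) * ((storageMatrix N) j k * u k i) := by
            refine Finset.sum_congr rfl fun k _ => ?_
            have := congrFun (hstat i) k
            simp only [Matrix.mulVec, dotProduct, Matrix.transpose_apply] at this
            rw [← this, Finset.sum_mul]
            exact Finset.sum_congr rfl fun j _ => by ring
        _ = ∑ j, (νbar i j - νlow i j) *
              (storageMatrix N).mulVec (fun k => u k i) j := by
            rw [Finset.sum_comm]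
            refine Finset.sum_congr rfl fun j _ => ?_
            simp only [Matrix.mulVec, dotProduct]
            rw [Finset.mul_sum]
        _ = ∑ k, νbar i k * b i := Finset.sum_congr rfl fun j _ => hL j
    have split : (∑ k, ∑ i, lam k i * v k i)
        = (∑ k, ∑ i, lam k i * (v k i + u k i)) - ∑ i, ∑ k, lam k i * u k i := by
      have h1 : (∑ i, ∑ k, lam k i * u k i) = ∑ k, ∑ i, lam k i * u k i :=
        Finset.sum_comm
      rw [h1, ← Finset.sum_sub_distrib]
      refine Finset.sum_congr rfl fun k _ => ?_
      rw [← Finset.sum_sub_distrib]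
      exact Finset.sum_congr rfl fun i _ => by ring
    rw [split,
        Finset.sum_congr rfl fun k _ => hA k,
        Finset.sum_congr rfl fun i _ => hB i]
    simp
    ring
  refine ⟨key, ?_⟩
  rw [key]
  have h1 : 0 ≤ ∑ k, ∑ ℓ, μ k ℓ * c ℓ :=
    Finset.sum_nonneg fun k _ => Finset.sum_nonneg fun ℓ _ =>
      mul_nonneg (hμ k ℓ) (hc ℓ)
  have h2 : 0 ≤ ∑ i, ∑ k, νbar i k * b i :=
    Finset.sum_nonneg fun i _ => Finset.sum_nonneg fun k _ =>
      mul_nonneg (hνbar i k) (hb i)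
  linarith
end

section
/- If a collection of point-to-point FTRs and flowgate rights (T, F) is simultaneously feasible (i.e., there exist storage injections q with t(k) + q(k) ∈ P(c − f(k)) for all k and q_i ∈ U(b_i) for all i), then its rent Φ(T,F) = ∑_{i,j} (λ_j − λ_i)ᵀ t_{ij} + ∑_ℓ μ_ℓᵀ f_ℓ is at most the transmission congestion surplus TCS derived at the efficient market equilibrium. -/
open Finset Matrix

theorem eq_zero_of_sum_Iic_eq_zero {α M : Type*} [PartialOrder α] [LocallyFiniteOrderBot α]
    [WellFoundedLT α] [AddCommGroup M] {g : α → M} (h : ∀ k, ∑ ℓ ∈ Iic k, g ℓ = 0) : g = 0 := by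
  classical
  funext k
  induction k using WellFoundedLT.induction with
  | _ k ih =>
    have hIio : ∑ ℓ ∈ Iio k, g ℓ = 0 := sum_eq_zero fun ℓ hℓ => ih ℓ (mem_Iio.mp hℓ)
    simpa [← Iio_insert, sum_insert, hIio] using h k

theorem sum_sum_sub_swap {ι M : Type*} [Fintype ι] [AddCommGroup M] (t : ι → ι → M) :
    ∑ i, ∑ j, (t i j - t j i) = 0 := by
  simp only [sum_sub_distrib]
  rw [sum_comm, sub_self]

theorem storageMatrix_mulVec_apply {N : ℕ} (x : Fin N → ℝ) (k : Fin N) :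
    (storageMatrix N *ᵥ x) k = -∑ ℓ ∈ Iic k, x ℓ := by
  simp [storageMatrix, mulVec, dotProduct, ite_mul, sum_ite, filter_ge_eq_Iic]

theorem storage_eq_zero_of_balanced {ι : Type*} [Fintype ι] {N : ℕ} {q : Fin N → ι → ℝ}
    (hbal : ∀ k, ∑ i, q k i = 0) (hsoc : ∀ i k, 0 ≤ (storageMatrix N *ᵥ fun k => q k i) k) :
    q = 0 := by
  have htotal : ∀ k, ∑ i, (storageMatrix N *ᵥ fun k => q k i) k = 0 := fun k => by
    simp only [storageMatrix_mulVec_apply, sum_neg_distrib]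
    rw [sum_comm, sum_eq_zero fun ℓ _ => hbal ℓ, neg_zero]
  have hsoc_zero : ∀ i k, (storageMatrix N *ᵥ fun k => q k i) k = 0 := fun i k =>
    (sum_eq_zero_iff_of_nonneg fun i _ => hsoc i k).mp (htotal k) i (mem_univ i)
  funext k i
  have : (fun k => q k i) = 0 := eq_zero_of_sum_Iic_eq_zero fun k => by
    simpa [storageMatrix_mulVec_apply] using hsoc_zero i k
  exact congrFun this k

theorem sum_sum_sub_mul_eq_neg_dotProduct {ι R : Type*} [Fintype ι] [CommRing R]
    (lam : ι → R) (t : ι → ι → R) :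
    ∑ i, ∑ j, (lam j - lam i) * t i j = -(lam ⬝ᵥ fun i => ∑ j, (t i j - t j i)) := by
  simp only [dotProduct, mul_sum, sub_mul, mul_sub, sum_sub_distrib]
  rw [sum_comm (f := fun i j => lam j * t i j)]
  ring

theorem neg_dotProduct_eq_dotProduct_mulVec {ι κ R : Type*} [Fintype ι] [Fintype κ] [CommRing R]
    {H : Matrix κ ι R} {μ : κ → R} {γ : R} {lam x : ι → R}
    (hlam : ∀ i, lam i = γ - (Hᵀ *ᵥ μ) i) (hx : ∑ i, x i = 0) :
    -(lam ⬝ᵥ x) = μ ⬝ᵥ (H *ᵥ x) := by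
  have : lam = γ • 1 - Hᵀ *ᵥ μ := funext fun i => by simp [hlam]
  rw [this, sub_dotProduct, smul_dotProduct, one_dotProduct, hx, dotProduct_mulVec,
    mulVec_transpose]
  simp

theorem rent_add_le_congestion_surplus {ι κ R : Type*} [Fintype ι] [Fintype κ] [CommRing R]
    [PartialOrder R] [IsOrderedRing R] {H : Matrix κ ι R} {c f μ : κ → R} {γ : R}
    {lam x y : ι → R} (hμ : 0 ≤ μ) (hlam : ∀ i, lam i = γ - (Hᵀ *ᵥ μ) i)
    (hx : ∑ i, x i = 0) (hHx : H *ᵥ x ≤ c - f)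
    (hy : ∑ i, y i = 0) (hcs : ∀ ℓ, μ ℓ * ((H *ᵥ y) ℓ - c ℓ) = 0) :
    -(lam ⬝ᵥ x) + μ ⬝ᵥ f ≤ -(lam ⬝ᵥ y) := by
  have hbinding : μ ⬝ᵥ (H *ᵥ y) = μ ⬝ᵥ c := by
    rw [← sub_eq_zero, ← dotProduct_sub]
    exact sum_eq_zero fun ℓ _ => by simpa using hcs ℓ
  rw [neg_dotProduct_eq_dotProduct_mulVec hlam hx, neg_dotProduct_eq_dotProduct_mulVec hlam hy,
    hbinding, ← dotProduct_add]
  exact dotProduct_le_dotProduct_of_nonneg_left (le_sub_iff_add_le.mp hHx) hμ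

theorem ftr_revenue_adequacy_general
    (n m N : ℕ) (H : Matrix (Fin (2 * m)) (Fin n) ℝ) (c : Fin (2 * m) → ℝ)
    (b : Fin n → ℝ)
    -- the efficient market equilibrium and its KKT multipliers
    (v u : Fin N → Fin n → ℝ) (γ : Fin N → ℝ) (μ : Fin N → Fin (2 * m) → ℝ)
    (lam : Fin N → Fin n → ℝ)
    (hμ : ∀ k ℓ, 0 ≤ μ k ℓ)
    (hlam : ∀ k i, lam k i = γ k - H.transpose.mulVec (μ k) i)
    (hbal : ∀ k, ∑ i, (v k i + u k i) = 0)
    (hcs_line : ∀ k ℓ, μ k ℓ * (H.mulVec (fun i => v k i + u k i) ℓ - c ℓ) = 0)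
    -- the collection of transmission rights
    (t : Fin n → Fin n → Fin N → ℝ)
    (f : Fin (2 * m) → Fin N → ℝ)
    -- simultaneous feasibility: a storage certificate q exists
    (hSF : ∃ q : Fin N → Fin n → ℝ,
      (∀ k, H.mulVec (fun i => (∑ j, (t i j k - t j i k)) + q k i) ≤
          fun ℓ => c ℓ - f ℓ k) ∧
      (∀ k, ∑ i, ((∑ j, (t i j k - t j i k)) + q k i) = 0) ∧
      (∀ i k, 0 ≤ (storageMatrix N).mulVec (fun k => q k i) k ∧
          (storageMatrix N).mulVec (fun k => q k i) k ≤ b i)) :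
    (∑ i, ∑ j, ∑ k, (lam k j - lam k i) * t i j k) +
        (∑ ℓ, ∑ k, μ k ℓ * f ℓ k) ≤
      -(∑ k, ∑ i, lam k i * (v k i + u k i)) := by
  obtain ⟨q, hflow_q, hbal_q, hsoc_q⟩ := hSF
  have hq : q = 0 := storage_eq_zero_of_balanced
    (fun k => by simpa only [sum_add_distrib, sum_sum_sub_swap, zero_add] using hbal_q k)
    (fun i k => (hsoc_q i k).1)
  subst hq
  calc (∑ i, ∑ j, ∑ k, (lam k j - lam k i) * t i j k) + (∑ ℓ, ∑ k, μ k ℓ * f ℓ k)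
      = ∑ k, (-(lam k ⬝ᵥ fun i => ∑ j, (t i j k - t j i k)) + μ k ⬝ᵥ fun ℓ => f ℓ k) := by
        rw [sum_add_distrib, sum_comm (f := fun ℓ k => μ k ℓ * f ℓ k),
          sum_congr rfl fun i _ => sum_comm, sum_comm]
        exact congrArg (· + _) (sum_congr rfl fun k _ => sum_sum_sub_mul_eq_neg_dotProduct _ _)
    _ ≤ ∑ k, -(lam k ⬝ᵥ fun i => v k i + u k i) := sum_le_sum fun k _ =>
        rent_add_le_congestion_surplus (hμ k) (hlam k) (sum_sum_sub_swap fun i j => t i j k)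
          (fun ℓ => by simpa using hflow_q k ℓ) (hbal k) (hcs_line k)
    _ = -(∑ k, ∑ i, lam k i * (v k i + u k i)) := by simp [dotProduct]

/-- Revenue adequacy of transmission rights: if the collection `(T, F)` of
point-to-point FTRs `t i j` and flowgate rights `f ℓ` is simultaneously feasible
(with a storage certificate `q`), then its rent
`Φ(T,F) = ∑ᵢⱼ (λⱼ-λᵢ)ᵀ tᵢⱼ + ∑ₗ μₗᵀ fₗ` is at most the transmission congestion
surplus `TCS = -∑ₖ λ(k)ᵀ(v(k)+u(k))`. -/
theorem ftr_revenue_adequacy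
    (n m N : ℕ) (H : Matrix (Fin (2 * m)) (Fin n) ℝ) (c : Fin (2 * m) → ℝ)
    (hc : ∀ ℓ, 0 ≤ c ℓ) (b : Fin n → ℝ) (hb : ∀ i, 0 ≤ b i)
    -- the efficient market equilibrium and its KKT multipliers
    (v u : Fin N → Fin n → ℝ) (γ : Fin N → ℝ) (μ : Fin N → Fin (2 * m) → ℝ)
    (lam : Fin N → Fin n → ℝ) (νbar νlow : Fin n → Fin N → ℝ)
    (hμ : ∀ k ℓ, 0 ≤ μ k ℓ)
    (hνbar : ∀ i k, 0 ≤ νbar i k) (hνlow : ∀ i k, 0 ≤ νlow i k)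
    (hlam : ∀ k i, lam k i = γ k - H.transpose.mulVec (μ k) i)
    (hflow : ∀ k, H.mulVec (fun i => v k i + u k i) ≤ c)
    (hbal : ∀ k, ∑ i, (v k i + u k i) = 0)
    (hcs_line : ∀ k ℓ, μ k ℓ * (H.mulVec (fun i => v k i + u k i) ℓ - c ℓ) = 0)
    (hstat : ∀ i, (storageMatrix N).transpose.mulVec (fun k => νbar i k - νlow i k)
        = fun k => lam k i)
    (hstg : ∀ i k, 0 ≤ (storageMatrix N).mulVec (fun k => u k i) k ∧
        (storageMatrix N).mulVec (fun k => u k i) k ≤ b i)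
    (hcs_low : ∀ i k, νlow i k * (storageMatrix N).mulVec (fun k => u k i) k = 0)
    (hcs_up : ∀ i k, νbar i k * (b i - (storageMatrix N).mulVec (fun k => u k i) k) = 0)
    -- the collection of transmission rights
    (t : Fin n → Fin n → Fin N → ℝ) (ht : ∀ i j k, 0 ≤ t i j k)
    (f : Fin (2 * m) → Fin N → ℝ) (hf : ∀ ℓ k, 0 ≤ f ℓ k)
    -- simultaneous feasibility: a storage certificate q exists
    (hSF : ∃ q : Fin N → Fin n → ℝ,
      (∀ k, H.mulVec (fun i => (∑ j, (t i j k - t j i k)) + q k i) ≤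
          fun ℓ => c ℓ - f ℓ k) ∧
      (∀ k, ∑ i, ((∑ j, (t i j k - t j i k)) + q k i) = 0) ∧
      (∀ i k, 0 ≤ (storageMatrix N).mulVec (fun k => q k i) k ∧
          (storageMatrix N).mulVec (fun k => q k i) k ≤ b i)) :
    (∑ i, ∑ j, ∑ k, (lam k j - lam k i) * t i j k) +
        (∑ ℓ, ∑ k, μ k ℓ * f ℓ k) ≤
      -(∑ k, ∑ i, lam k i * (v k i + u k i)) :=
  ftr_revenue_adequacy_general n m N H c b v u γ μ lam hμ hlam hbal hcs_line t f hSF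
end

section
/- Generalized simultaneous feasibility test (revenue adequacy): if a collection of transmission and storage rights (T, F, S, E) is simultaneously feasible — i.e., there exist storage injections q with t(k) − s(k) + q(k) ∈ P(c − f(k)) for all k and q_i ∈ U(b_i − e_i) for all i — then the total rent Φ(T,F) + Σ(S,E) = ∑_{i,j}(λ_j − λ_i)ᵀ t_{ij} + ∑_ℓ μ_ℓᵀ f_ℓ + ∑_i λ_iᵀ s_i + ∑_i ν̄_iᵀ e_i is at most the merchandising surplus MS derived at the efficient market equilibrium. -/
/-- Generalized simultaneous feasibility test (revenue adequacy): if the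
collection `(T, F, S, E)` of FTRs `t i j`, flowgate rights `f ℓ`, FSRs `s i`,
and energy capacity rights `e i` is simultaneously feasible, then the total
rent `Φ(T,F) + Σ(S,E)` is at most the merchandising surplus
`MS = -∑ₖ λ(k)ᵀ v(k)`. -/
theorem generalized_sft_revenue_adequacy
    (n m N : ℕ) (H : Matrix (Fin (2 * m)) (Fin n) ℝ) (c : Fin (2 * m) → ℝ)
    (hc : ∀ ℓ, 0 ≤ c ℓ) (b : Fin n → ℝ) (hb : ∀ i, 0 ≤ b i)
    -- the efficient market equilibrium and its KKT multipliers
    (v u : Fin N → Fin n → ℝ) (γ : Fin N → ℝ) (μ : Fin N → Fin (2 * m) → ℝ)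
    (lam : Fin N → Fin n → ℝ) (νbar νlow : Fin n → Fin N → ℝ)
    (hμ : ∀ k ℓ, 0 ≤ μ k ℓ)
    (hνbar : ∀ i k, 0 ≤ νbar i k) (hνlow : ∀ i k, 0 ≤ νlow i k)
    (hlam : ∀ k i, lam k i = γ k - H.transpose.mulVec (μ k) i)
    (hflow : ∀ k, H.mulVec (fun i => v k i + u k i) ≤ c)
    (hbal : ∀ k, ∑ i, (v k i + u k i) = 0)
    (hcs_line : ∀ k ℓ, μ k ℓ * (H.mulVec (fun i => v k i + u k i) ℓ - c ℓ) = 0)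
    (hstat : ∀ i, (storageMatrix N).transpose.mulVec (fun k => νbar i k - νlow i k)
        = fun k => lam k i)
    (hstg : ∀ i k, 0 ≤ (storageMatrix N).mulVec (fun k => u k i) k ∧
        (storageMatrix N).mulVec (fun k => u k i) k ≤ b i)
    (hcs_low : ∀ i k, νlow i k * (storageMatrix N).mulVec (fun k => u k i) k = 0)
    (hcs_up : ∀ i k, νbar i k * (b i - (storageMatrix N).mulVec (fun k => u k i) k) = 0)
    -- the collection of transmission and storage rights
    (t : Fin n → Fin n → Fin N → ℝ) (ht : ∀ i j k, 0 ≤ t i j k)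
    (f : Fin (2 * m) → Fin N → ℝ) (hf : ∀ ℓ k, 0 ≤ f ℓ k)
    (s : Fin n → Fin N → ℝ)
    (e : Fin n → Fin N → ℝ) (he : ∀ i k, 0 ≤ e i k)
    -- simultaneous feasibility: a storage certificate q exists
    (hSF : ∃ q : Fin N → Fin n → ℝ,
      (∀ k, H.mulVec (fun i => (∑ j, (t i j k - t j i k)) - s i k + q k i) ≤
          fun ℓ => c ℓ - f ℓ k) ∧
      (∀ k, ∑ i, ((∑ j, (t i j k - t j i k)) - s i k + q k i) = 0) ∧
      (∀ i k, 0 ≤ (storageMatrix N).mulVec (fun k => q k i) k ∧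
          (storageMatrix N).mulVec (fun k => q k i) k ≤ b i - e i k)) :
    (∑ i, ∑ j, ∑ k, (lam k j - lam k i) * t i j k) +
        (∑ ℓ, ∑ k, μ k ℓ * f ℓ k) +
        (∑ i, ∑ k, lam k i * s i k) +
        (∑ i, ∑ k, νbar i k * e i k) ≤
      -(∑ k, ∑ i, lam k i * v k i) := by
  classical
  obtain ⟨q, hq1, hq2, hq3⟩ := hSF
  -- Lemma A: prices times a balanced vector
  have lemA : ∀ (k : Fin N) (x : Fin n → ℝ), (∑ i, x i) = 0 →
      ∑ i, lam k i * x i = -∑ ℓ, μ k ℓ * H.mulVec x ℓ := by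
    intro k x hx
    have h1 : ∑ i, lam k i * x i
        = (∑ i, γ k * x i) - ∑ i, ∑ ℓ, μ k ℓ * (H ℓ i * x i) := by
      rw [← Finset.sum_sub_distrib]
      refine Finset.sum_congr rfl fun i _ => ?_
      rw [hlam]
      simp only [Matrix.mulVec, dotProduct, Matrix.transpose_apply]
      rw [sub_mul, Finset.sum_mul]
      congr 1
      exact Finset.sum_congr rfl fun ℓ _ => by ring
    rw [h1, ← Finset.mul_sum, hx, mul_zero, zero_sub, Finset.sum_comm]
    congr 1
    refine Finset.sum_congr rfl fun ℓ _ => ?_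
    simp only [Matrix.mulVec, dotProduct, Finset.mul_sum]
  -- Lemma B: prices over time against a storage profile
  have lemB : ∀ (i : Fin n) (x : Fin N → ℝ),
      ∑ k, lam k i * x k
        = ∑ k, (νbar i k - νlow i k) * (storageMatrix N).mulVec x k := by
    intro i x
    have h1 : ∀ k, lam k i = ∑ l, storageMatrix N l k * (νbar i l - νlow i l) := by
      intro k
      have h := congrFun (hstat i) k
      simpa [Matrix.mulVec, dotProduct, Matrix.transpose_apply] using h.symm
    calc ∑ k, lam k i * x k
        = ∑ k, ∑ l, storageMatrix N l k * (νbar i l - νlow i l) * x k := by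
          exact Finset.sum_congr rfl fun k _ => by rw [h1, Finset.sum_mul]
      _ = ∑ l, ∑ k, storageMatrix N l k * (νbar i l - νlow i l) * x k :=
          Finset.sum_comm
      _ = ∑ l, (νbar i l - νlow i l) * (storageMatrix N).mulVec x l := by
          refine Finset.sum_congr rfl fun l _ => ?_
          simp only [Matrix.mulVec, dotProduct, Finset.mul_sum]
          exact Finset.sum_congr rfl fun k _ => by ring
  -- Step 1: equilibrium congestion rent identity
  have eq1 : ∀ k, ∑ i, lam k i * (v k i + u k i) = -∑ ℓ, μ k ℓ * c ℓ := by
    intro k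
    rw [lemA k _ (hbal k)]
    congr 1
    refine Finset.sum_congr rfl fun ℓ _ => ?_
    have := hcs_line k ℓ
    nlinarith [this]
  -- the feasible net injection vector
  set w : Fin N → Fin n → ℝ :=
    fun k i => (∑ j, (t i j k - t j i k)) - s i k + q k i with hw
  -- Step 2: lower bound for the rights vector
  have ineq2 : ∀ k, (∑ ℓ, μ k ℓ * f ℓ k) - (∑ ℓ, μ k ℓ * c ℓ)
      ≤ ∑ i, lam k i * w k i := by
    intro k
    rw [lemA k _ (hq2 k)]
    rw [← Finset.sum_sub_distrib, ← Finset.sum_neg_distrib]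
    refine Finset.sum_le_sum fun ℓ _ => ?_
    have h1 : H.mulVec (fun i => w k i) ℓ ≤ c ℓ - f ℓ k := by
      have := hq1 k ℓ
      simpa [hw] using this
    have h2 := hμ k ℓ
    nlinarith [h1, h2]
  -- Step 3: storage rent for the equilibrium
  have eq3 : ∀ i, ∑ k, lam k i * u k i = ∑ k, νbar i k * b i := by
    intro i
    rw [lemB i (fun k => u k i)]
    refine Finset.sum_congr rfl fun k _ => ?_
    have h1 := hcs_low i k
    have h2 := hcs_up i k
    nlinarith [h1, h2]
  -- Step 4: storage rent for the rights
  have ineq4 : ∀ i, ∑ k, lam k i * q k i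
      ≤ ∑ k, (νbar i k * b i - νbar i k * e i k) := by
    intro i
    rw [lemB i (fun k => q k i)]
    refine Finset.sum_le_sum fun k _ => ?_
    obtain ⟨h1, h2⟩ := hq3 i k
    nlinarith [hνbar i k, hνlow i k, h1, h2]
  -- Step 5: FTR decomposition per period
  have eq5 : ∀ k, ∑ i, lam k i * (∑ j, (t i j k - t j i k))
      = -∑ i, ∑ j, (lam k j - lam k i) * t i j k := by
    intro k
    have h1 : ∑ i, lam k i * (∑ j, (t i j k - t j i k))
        = (∑ i, ∑ j, lam k i * t i j k) - ∑ i, ∑ j, lam k i * t j i k := by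
      rw [← Finset.sum_sub_distrib]
      refine Finset.sum_congr rfl fun i _ => ?_
      rw [Finset.mul_sum, ← Finset.sum_sub_distrib]
      exact Finset.sum_congr rfl fun j _ => by ring
    rw [h1]
    rw [show (∑ i, ∑ j, lam k i * t j i k) = ∑ j, ∑ i, lam k i * t j i k from
      Finset.sum_comm]
    rw [← Finset.sum_neg_distrib, ← Finset.sum_sub_distrib]
    refine Finset.sum_congr rfl fun i _ => ?_
    rw [← Finset.sum_neg_distrib, ← Finset.sum_sub_distrib]
    exact Finset.sum_congr rfl fun j _ => by ring
  -- Now combine everything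
  have key : ∑ k, ((∑ ℓ, μ k ℓ * f ℓ k) + ∑ i, lam k i * (v k i + u k i))
      ≤ ∑ k, ∑ i, lam k i * w k i := by
    refine Finset.sum_le_sum fun k _ => ?_
    have := ineq2 k
    rw [eq1 k]
    linarith
  -- expand the w-sum
  have hwexp : ∀ k, ∑ i, lam k i * w k i
      = (-∑ i, ∑ j, (lam k j - lam k i) * t i j k)
        - (∑ i, lam k i * s i k) + ∑ i, lam k i * q k i := by
    intro k
    rw [← eq5 k, ← Finset.sum_sub_distrib, ← Finset.sum_add_distrib]
    refine Finset.sum_congr rfl fun i _ => ?_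
    simp only [hw]
    ring
  have key2 : ∑ k, ((∑ ℓ, μ k ℓ * f ℓ k) + ∑ i, lam k i * (v k i + u k i))
      ≤ ∑ k, ((-∑ i, ∑ j, (lam k j - lam k i) * t i j k)
        - (∑ i, lam k i * s i k) + ∑ i, lam k i * q k i) := by
    refine le_trans key (le_of_eq ?_)
    exact Finset.sum_congr rfl fun k _ => hwexp k
  -- split all the sums
  simp only [Finset.sum_add_distrib, Finset.sum_sub_distrib,
    Finset.sum_neg_distrib] at key2
  have sA : (∑ i, ∑ j, ∑ k, (lam k j - lam k i) * t i j k)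
      = ∑ k, ∑ i, ∑ j, (lam k j - lam k i) * t i j k := by
    calc (∑ i, ∑ j, ∑ k, (lam k j - lam k i) * t i j k)
        = ∑ i, ∑ k, ∑ j, (lam k j - lam k i) * t i j k :=
          Finset.sum_congr rfl fun i _ => Finset.sum_comm
      _ = ∑ k, ∑ i, ∑ j, (lam k j - lam k i) * t i j k := Finset.sum_comm
  have sF : (∑ ℓ, ∑ k, μ k ℓ * f ℓ k) = ∑ k, ∑ ℓ, μ k ℓ * f ℓ k :=
    Finset.sum_comm
  have sS : (∑ i, ∑ k, lam k i * s i k) = ∑ k, ∑ i, lam k i * s i k :=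
    Finset.sum_comm
  have sQ : (∑ k, ∑ i, lam k i * q k i) = ∑ i, ∑ k, lam k i * q k i :=
    Finset.sum_comm
  have sU : (∑ k, ∑ i, lam k i * u k i) = ∑ i, ∑ k, lam k i * u k i :=
    Finset.sum_comm
  have sVU : (∑ k, ∑ i, lam k i * (v k i + u k i))
      = (∑ k, ∑ i, lam k i * v k i) + ∑ k, ∑ i, lam k i * u k i := by
    rw [← Finset.sum_add_distrib]
    refine Finset.sum_congr rfl fun k _ => ?_
    rw [← Finset.sum_add_distrib]
    exact Finset.sum_congr rfl fun i _ => by ring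
  have hU : (∑ i, ∑ k, lam k i * u k i) = ∑ i, ∑ k, νbar i k * b i :=
    Finset.sum_congr rfl fun i _ => eq3 i
  have hQ : (∑ i, ∑ k, lam k i * q k i)
      ≤ (∑ i, ∑ k, νbar i k * b i) - ∑ i, ∑ k, νbar i k * e i k := by
    have h1 : (∑ i, ∑ k, lam k i * q k i)
        ≤ ∑ i, ∑ k, (νbar i k * b i - νbar i k * e i k) :=
      Finset.sum_le_sum fun i _ => ineq4 i
    simpa [Finset.sum_sub_distrib] using h1
  linarith
end

section
/- The generalized simultaneous feasibility bound is tight: the collection of rights defined by t(k) = v(k) + u(k), f(k) = 0, s(k) = u(k), e_i = 0, together with the storage-injection certificate q(k) = u(k), is simultaneously feasible and its total rent Φ(T,F) + Σ(S,E) equals MS = −∑_k λ(k)ᵀ v(k). -/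
/-- Tightness of the generalized simultaneous feasibility bound: the collection
with `t(k) = v(k)+u(k)`, `f = 0`, `s(k) = u(k)`, `e = 0`, certified with storage
injections `q(k) = u(k)`, is simultaneously feasible and its total rent
`-∑ₖ λ(k)ᵀ t(k) + ∑ₖ λ(k)ᵀ s(k) + 0` equals `MS = -∑ₖ λ(k)ᵀ v(k)`. -/
theorem generalized_sft_bound_tight
    (n m N : ℕ) (H : Matrix (Fin (2 * m)) (Fin n) ℝ) (c : Fin (2 * m) → ℝ)
    (b : Fin n → ℝ)
    (v u : Fin N → Fin n → ℝ) (lam : Fin N → Fin n → ℝ)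
    (hflow : ∀ k, H.mulVec (fun i => v k i + u k i) ≤ c)
    (hbal : ∀ k, ∑ i, (v k i + u k i) = 0)
    (hstg : ∀ i k, 0 ≤ (storageMatrix N).mulVec (fun k => u k i) k ∧
        (storageMatrix N).mulVec (fun k => u k i) k ≤ b i)
    (t s q : Fin N → Fin n → ℝ)
    (ht : ∀ k i, t k i = v k i + u k i)
    (hs : ∀ k i, s k i = u k i)
    (hqdef : ∀ k i, q k i = u k i)
    (f : Fin (2 * m) → Fin N → ℝ) (hf : ∀ ℓ k, f ℓ k = 0)
    (e : Fin n → Fin N → ℝ) (he : ∀ i k, e i k = 0) :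
    -- simultaneous feasibility of (t, f, s, e) certified by q
    ((∀ k, H.mulVec (fun i => t k i - s k i + q k i) ≤ fun ℓ => c ℓ - f ℓ k) ∧
      (∀ k, ∑ i, (t k i - s k i + q k i) = 0) ∧
      (∀ i k, 0 ≤ (storageMatrix N).mulVec (fun k => q k i) k ∧
        (storageMatrix N).mulVec (fun k => q k i) k ≤ b i - e i k)) ∧
    -- the total rent equals the MS
    ((-(∑ k, ∑ i, lam k i * t k i)) + (∑ k, ∑ i, lam k i * s k i) +
        (∑ i, ∑ k, (0 : ℝ) * e i k) =
      -(∑ k, ∑ i, lam k i * v k i)) := by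
  have key : ∀ k i, t k i - s k i + q k i = v k i + u k i := by
    intro k i; rw [ht, hs, hqdef]; ring
  refine ⟨⟨fun k => ?_, fun k => ?_, fun i k => ?_⟩, ?_⟩
  · simp only [key, hf]
    intro ℓ
    simpa using hflow k ℓ
  · simp only [key]; exact hbal k
  · have := hstg i k
    simp only [hqdef, he, sub_zero]
    exact this
  · simp only [ht, hs, he, mul_zero, zero_mul, Finset.sum_const_zero, add_zero,
      mul_add, Finset.sum_add_distrib]
    ring
end
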